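/- arXiv:1904.10694 — 5 statements merged into one kernel-verified Lean document; each statement's English description precedes it below -/
import Mathlib

section
/- Suppose the monic real polynomials P_1 and P_2 of degrees d_1 and d_2 realize the sign patterns σ_1 = (+, σ̂_1) and σ_2 = (+, σ̂_2) and have exactly (pos_1, neg_1) and (pos_2, neg_2) positive and negative real roots respectively, all real roots being simple. If the last entry of σ̂_1 is −, then for all sufficiently small ε > 0 the polynomial ε^{d_2} P_1(x) P_2(x/ε) realizes the sign pattern (+, σ̂_1, −σ̂_2) (where −σ̂_2 is σ̂_2 with all signs flipped) and has exactly pos_1 + pos_2 positive and neg_1 + neg_2 negative real roots. -/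
open Polynomial

lemma coeff_comp_C_mul_X (p : Polynomial ℝ) (c : ℝ) (b : ℕ) :
    (p.comp (C c * X)).coeff b = p.coeff b * c ^ b := by
  induction p using Polynomial.induction_on' with
  | add p q hp hq => simp [add_comp, hp, hq, add_mul]
  | monomial n a =>
    simp only [monomial_comp, coeff_monomial]
    rw [mul_pow, ← C_pow, ← mul_assoc, ← C_mul, coeff_C_mul, coeff_X_pow]
    rcases eq_or_ne n b with rfl | h
    · simp [mul_comm]
    · simp [h, Ne.symm h]

lemma comp_comp_inv (p : Polynomial ℝ) {c : ℝ} (hc : c ≠ 0) :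
    (p.comp (C c * X)).comp (C c⁻¹ * X) = p := by
  rw [comp_assoc]
  simp [mul_comp, ← mul_assoc, ← C_mul, mul_inv_cancel₀ hc]

lemma dvd_comp {p q s : Polynomial ℝ} (h : q ∣ p) : q.comp s ∣ p.comp s := by
  obtain ⟨u, rfl⟩ := h
  exact ⟨u.comp s, by rw [mul_comp]⟩

lemma pow_sub_C_dvd_comp_iff {p : Polynomial ℝ} {c r : ℝ} (hc : c ≠ 0) (n : ℕ) :
    (X - C r) ^ n ∣ p.comp (C c * X) ↔ (X - C (c * r)) ^ n ∣ p := by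
  constructor
  · intro h
    have h2 := dvd_comp (s := C c⁻¹ * X) h
    rw [comp_comp_inv p hc] at h2
    rw [pow_comp, sub_comp, X_comp, C_comp] at h2
    have key : C c⁻¹ * X - C r = C c⁻¹ * (X - C (c * r)) := by
      rw [mul_sub, ← C_mul, ← mul_assoc, inv_mul_cancel₀ hc, one_mul]
    rw [key, mul_pow, ← C_pow] at h2
    exact dvd_trans (Dvd.intro_left _ rfl) h2
  · intro h
    have h2 := dvd_comp (s := C c * X) h
    rw [pow_comp, sub_comp, X_comp, C_comp] at h2
    have key : C c * X - C (c * r) = C c * (X - C r) := by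
      rw [mul_sub, ← C_mul]
    rw [key, mul_pow, ← C_pow] at h2
    exact dvd_trans (Dvd.intro_left _ rfl) h2

lemma comp_C_mul_X_ne_zero {p : Polynomial ℝ} (hp : p ≠ 0) {c : ℝ} (hc : c ≠ 0) :
    p.comp (C c * X) ≠ 0 := by
  intro h
  apply hp
  have := comp_comp_inv p hc
  rw [h, zero_comp] at this
  exact this.symm

lemma rootMultiplicity_comp_C_mul_X (p : Polynomial ℝ) {c : ℝ} (hp : p ≠ 0) (hc : c ≠ 0)
    (r : ℝ) : rootMultiplicity r (p.comp (C c * X)) = rootMultiplicity (c * r) p := by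
  apply le_antisymm
  · rw [le_rootMultiplicity_iff hp, ← pow_sub_C_dvd_comp_iff hc]
    exact pow_rootMultiplicity_dvd _ _
  · rw [le_rootMultiplicity_iff (comp_C_mul_X_ne_zero hp hc), pow_sub_C_dvd_comp_iff hc]
    exact pow_rootMultiplicity_dvd _ _

lemma roots_comp_C_mul_X (p : Polynomial ℝ) {c : ℝ} (hp : p ≠ 0) (hc : c ≠ 0) :
    (p.comp (C c * X)).roots = p.roots.map (fun r => c⁻¹ * r) := by
  have hinj : Function.Injective (fun r : ℝ => c⁻¹ * r) :=
    fun a b h => by field_simp at h; exact h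
  ext r
  rw [count_roots, rootMultiplicity_comp_C_mul_X p hp hc r, ← count_roots p,
    ← Multiset.count_map_eq_count' (fun r : ℝ => c⁻¹ * r) _ hinj]
  simp only [inv_mul_cancel_left₀ hc]


/-- The concatenation `ε^{d₂} P₁(x) P₂(x/ε)`. -/
noncomputable def concat (P₁ P₂ : Polynomial ℝ) (d₂ : ℕ) (ε : ℝ) : Polynomial ℝ :=
  C (ε ^ d₂) * P₁ * P₂.comp (C ε⁻¹ * X)

lemma coeff_concat (P₁ P₂ : Polynomial ℝ) (d₂ : ℕ) (h₂d : P₂.natDegree = d₂) {ε : ℝ}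
    (hε : ε ≠ 0) (j : ℕ) :
    (concat P₁ P₂ d₂ ε).coeff j =
      ε ^ (d₂ - min j d₂) * ∑ b ∈ Finset.range (min j d₂ + 1),
        P₁.coeff (j - b) * P₂.coeff b * ε ^ (min j d₂ - b) := by
  have hm2 : min j d₂ ≤ d₂ := min_le_right _ _
  have hmj : min j d₂ ≤ j := min_le_left _ _
  calc (concat P₁ P₂ d₂ ε).coeff j
      = ∑ k ∈ Finset.range (j+1), P₂.coeff k * ε⁻¹ ^ k * P₁.coeff (j-k) * ε ^ d₂ := by
        rw [concat, mul_assoc, mul_comm P₁, coeff_C_mul, coeff_mul,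
          Finset.Nat.sum_antidiagonal_eq_sum_range_succ
            (fun a b => (P₂.comp (C ε⁻¹ * X)).coeff a * P₁.coeff b), Finset.mul_sum]
        exact Finset.sum_congr rfl fun k _ => by rw [coeff_comp_C_mul_X]; ring
    _ = ∑ k ∈ Finset.range (min j d₂ + 1), P₂.coeff k * ε⁻¹ ^ k * P₁.coeff (j-k) * ε ^ d₂ := by
        apply (Finset.sum_subset (Finset.range_subset_range.mpr (by omega)) _).symm
        intro k hk hk2
        simp only [Finset.mem_range] at hk hk2
        have : P₂.coeff k = 0 := coeff_eq_zero_of_natDegree_lt (by omega)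
        simp [this]
    _ = _ := by
        rw [Finset.mul_sum]
        apply Finset.sum_congr rfl
        intro k hk
        simp only [Finset.mem_range] at hk
        have h1 : ε⁻¹ ^ k * ε ^ d₂ = ε ^ (d₂ - min j d₂) * ε ^ (min j d₂ - k) := by
          rw [← pow_add, inv_pow]
          have h2 : d₂ - min j d₂ + (min j d₂ - k) = d₂ - k := by omega
          rw [h2, inv_mul_eq_iff_eq_mul₀ (pow_ne_zero _ hε), ← pow_add]
          congr 1; omega
        calc P₂.coeff k * ε⁻¹ ^ k * P₁.coeff (j-k) * ε ^ d₂
            = (ε⁻¹ ^ k * ε ^ d₂) * (P₁.coeff (j-k) * P₂.coeff k) := by ring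
          _ = _ := by rw [h1]; ring

lemma sign_eventually {g : ℝ → ℝ} (hg : Continuous g) (h0 : g 0 ≠ 0) (k : ℕ) :
    ∀ᶠ ε in nhdsWithin 0 (Set.Ioi (0:ℝ)), Real.sign (ε ^ k * g ε) = Real.sign (g 0) := by
  rcases h0.lt_or_gt with hneg | hpos
  · have h1 : {t : ℝ | g t < 0} ∈ nhds (0:ℝ) :=
      (isOpen_lt hg continuous_const).mem_nhds hneg
    filter_upwards [mem_nhdsWithin_of_mem_nhds h1, self_mem_nhdsWithin] with t ht ht'
    rw [Real.sign_of_neg hneg, Real.sign_of_neg (mul_neg_of_pos_of_neg (pow_pos ht' k) ht)]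
  · have h1 : {t : ℝ | 0 < g t} ∈ nhds (0:ℝ) :=
      (isOpen_lt continuous_const hg).mem_nhds hpos
    filter_upwards [mem_nhdsWithin_of_mem_nhds h1, self_mem_nhdsWithin] with t ht ht'
    rw [Real.sign_of_pos hpos, Real.sign_of_pos (mul_pos (pow_pos ht' k) ht)]


/-- Concatenation lemma, part (2). If monic `P₁, P₂` (degrees `d₁, d₂`,
all coefficients nonzero, simple real roots, exactly `posᵢ` positive and `negᵢ`
negative roots) and the constant coefficient of `P₁` is negative, then for all small
`ε > 0` the polynomial `ε^{d₂} P₁(x) P₂(x/ε)` realizes the sign pattern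
`(+, σ̂₁, -σ̂₂)` and has exactly `pos₁ + pos₂` positive and `neg₁ + neg₂` negative
real roots. -/
theorem stmt13 (d₁ d₂ pos₁ neg₁ pos₂ neg₂ : ℕ) (P₁ P₂ : Polynomial ℝ)
    (h₁m : P₁.Monic) (h₂m : P₂.Monic)
    (h₁d : P₁.natDegree = d₁) (h₂d : P₂.natDegree = d₂)
    (hd₁ : 1 ≤ d₁) (hd₂ : 1 ≤ d₂)
    (h₁c : ∀ j ≤ d₁, P₁.coeff j ≠ 0) (h₂c : ∀ j ≤ d₂, P₂.coeff j ≠ 0)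
    (h₁nd : P₁.roots.Nodup) (h₂nd : P₂.roots.Nodup)
    (h₁pos : Multiset.card (P₁.roots.filter (fun x => 0 < x)) = pos₁)
    (h₁neg : Multiset.card (P₁.roots.filter (fun x => x < 0)) = neg₁)
    (h₂pos : Multiset.card (P₂.roots.filter (fun x => 0 < x)) = pos₂)
    (h₂neg : Multiset.card (P₂.roots.filter (fun x => x < 0)) = neg₂)
    (hlast : P₁.coeff 0 < 0) :
    ∃ ε₀ > (0 : ℝ), ∀ ε : ℝ, 0 < ε → ε < ε₀ →
      (∀ j ≤ d₁ + d₂,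
        (d₂ ≤ j → Real.sign ((concat P₁ P₂ d₂ ε).coeff j) = Real.sign (P₁.coeff (j - d₂))) ∧
        (j < d₂ → Real.sign ((concat P₁ P₂ d₂ ε).coeff j) = - Real.sign (P₂.coeff j))) ∧
      Multiset.card ((concat P₁ P₂ d₂ ε).roots.filter (fun x => 0 < x)) = pos₁ + pos₂ ∧
      Multiset.card ((concat P₁ P₂ d₂ ε).roots.filter (fun x => x < 0)) = neg₁ + neg₂ := by
  have hP₁0 : P₁ ≠ 0 := h₁m.ne_zero
  have hP₂0 : P₂ ≠ 0 := h₂m.ne_zero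
  -- Part A: sign conditions hold eventually near 0 from the right
  have key : ∀ᶠ ε in nhdsWithin 0 (Set.Ioi (0:ℝ)), ∀ j ∈ Finset.range (d₁ + d₂ + 1),
      (d₂ ≤ j → Real.sign ((concat P₁ P₂ d₂ ε).coeff j) = Real.sign (P₁.coeff (j - d₂))) ∧
      (j < d₂ → Real.sign ((concat P₁ P₂ d₂ ε).coeff j) = - Real.sign (P₂.coeff j)) := by
    rw [Filter.eventually_all_finset]
    intro j hj
    simp only [Finset.mem_range] at hj
    set m := min j d₂ with hm
    set g : ℝ → ℝ := fun t => ∑ b ∈ Finset.range (m+1),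
      P₁.coeff (j-b) * P₂.coeff b * t ^ (m-b) with hgdef
    have hgc : Continuous g := by
      apply continuous_finset_sum
      intro b _
      exact continuous_const.mul (continuous_pow _)
    have hg0 : g 0 = P₁.coeff (j - m) * P₂.coeff m := by
      rw [hgdef]
      simp only
      rw [Finset.sum_eq_single m]
      · simp
      · intro b hb hbne
        simp only [Finset.mem_range] at hb
        have hne : m - b ≠ 0 := by omega
        simp [zero_pow hne]
      · intro h
        exact absurd (Finset.self_mem_range_succ m) h
    have hcoeff : ∀ ε : ℝ, ε ≠ 0 → (concat P₁ P₂ d₂ ε).coeff j = ε ^ (d₂ - m) * g ε :=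
      fun ε hε => coeff_concat P₁ P₂ d₂ h₂d hε j
    rcases le_or_gt d₂ j with hj2 | hj2
    · have hmm : m = d₂ := min_eq_right hj2
      have hg0' : g 0 = P₁.coeff (j - d₂) := by
        rw [hg0, hmm, ← h₂d, h₂m.coeff_natDegree, mul_one]
      have hne : g 0 ≠ 0 := by rw [hg0']; exact h₁c _ (by omega)
      filter_upwards [sign_eventually hgc hne (d₂ - m), self_mem_nhdsWithin] with ε hε hε'
      refine ⟨fun _ => ?_, fun h => absurd h (not_lt.mpr hj2)⟩
      rw [hcoeff ε (ne_of_gt hε'), hε, hg0']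
    · have hmm : m = j := min_eq_left hj2.le
      have hg0' : g 0 = P₁.coeff 0 * P₂.coeff j := by rw [hg0, hmm]; simp
      have hne : g 0 ≠ 0 := by
        rw [hg0']; exact mul_ne_zero (ne_of_lt hlast) (h₂c j hj2.le)
      filter_upwards [sign_eventually hgc hne (d₂ - m), self_mem_nhdsWithin] with ε hε hε'
      refine ⟨fun h => absurd h (by omega), fun _ => ?_⟩
      rw [hcoeff ε (ne_of_gt hε'), hε, hg0']
      rcases (h₂c j hj2.le).lt_or_gt with h2 | h2
      · rw [Real.sign_of_pos (mul_pos_of_neg_of_neg hlast h2), Real.sign_of_neg h2]; norm_num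
      · rw [Real.sign_of_neg (mul_neg_of_neg_of_pos hlast h2), Real.sign_of_pos h2]
  -- Part B: root counts hold for every ε > 0
  have rootsB : ∀ ε : ℝ, 0 < ε →
      Multiset.card ((concat P₁ P₂ d₂ ε).roots.filter (fun x => 0 < x)) = pos₁ + pos₂ ∧
      Multiset.card ((concat P₁ P₂ d₂ ε).roots.filter (fun x => x < 0)) = neg₁ + neg₂ := by
    intro ε hε
    have hεne : ε ≠ 0 := ne_of_gt hε
    have hQ0 : P₂.comp (C ε⁻¹ * X) ≠ 0 := comp_C_mul_X_ne_zero hP₂0 (inv_ne_zero hεne)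
    have hroots : (concat P₁ P₂ d₂ ε).roots = P₁.roots + (P₂.roots).map (fun r => ε * r) := by
      rw [concat, mul_assoc, roots_C_mul _ (pow_ne_zero _ hεne),
        roots_mul (mul_ne_zero hP₁0 hQ0),
        roots_comp_C_mul_X P₂ hP₂0 (inv_ne_zero hεne), inv_inv]
    constructor
    · rw [hroots, Multiset.filter_add, Multiset.card_add, h₁pos,
        ← Multiset.countP_eq_card_filter, Multiset.countP_map]
      have : (P₂.roots.filter fun a => 0 < ε * a) = P₂.roots.filter fun x => 0 < x :=
        Multiset.filter_congr (fun a _ => mul_pos_iff_of_pos_left hε)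
      rw [this, h₂pos]
    · rw [hroots, Multiset.filter_add, Multiset.card_add, h₁neg,
        ← Multiset.countP_eq_card_filter, Multiset.countP_map]
      have : (P₂.roots.filter fun a => ε * a < 0) = P₂.roots.filter fun x => x < 0 :=
        Multiset.filter_congr (fun a _ =>
          ⟨fun h => by nlinarith, fun h => mul_neg_of_pos_of_neg hε h⟩)
      rw [this, h₂neg]
  have keyB : ∀ᶠ ε in nhdsWithin 0 (Set.Ioi (0:ℝ)),
      Multiset.card ((concat P₁ P₂ d₂ ε).roots.filter (fun x => 0 < x)) = pos₁ + pos₂ ∧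
      Multiset.card ((concat P₁ P₂ d₂ ε).roots.filter (fun x => x < 0)) = neg₁ + neg₂ :=
    Filter.eventually_of_mem self_mem_nhdsWithin (fun ε hε => rootsB ε hε)
  have total := key.and keyB
  rw [Filter.eventually_iff_exists_mem] at total
  obtain ⟨s, hs, hsub⟩ := total
  rw [Metric.mem_nhdsWithin_iff] at hs
  obtain ⟨ε₀, hε₀, hball⟩ := hs
  refine ⟨ε₀, hε₀, fun ε hε1 hε2 => ?_⟩
  have hmem : ε ∈ Metric.ball (0:ℝ) ε₀ ∩ Set.Ioi 0 := by
    constructor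
    · rw [Metric.mem_ball, Real.dist_eq, sub_zero, abs_of_pos hε1]; exact hε2
    · exact hε1
  obtain ⟨hA, hB⟩ := hsub ε (hball hmem)
  exact ⟨fun j hj => hA j (Finset.mem_range.mpr (by omega)), hB⟩
end

section
/- Every sign pattern σ of length d+1 (beginning with +) with c sign changes and p sign preservations is realizable by a monic degree d hyperbolic polynomial having c distinct positive roots and p distinct negative roots, all d root moduli pairwise distinct, with the order of moduli matching the canonical order: reading the sign pattern left to right, sign changes correspond to positive roots and sign preservations to negative roots, in decreasing order of modulus. -/
open Polynomial

section Stmt14Aux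
open Finset

lemma sign_pert {a x : ℝ} (h : |x| < |a|) : (0 < a - x ↔ 0 < a) ∧ a - x ≠ 0 := by
  obtain ⟨h1, h2⟩ := abs_lt.mp h
  rcases abs_cases a with ⟨e, ha⟩ | ⟨e, ha⟩ <;> rw [e] at h1 h2 <;>
    constructor <;> first | (constructor <;> intro <;> linarith) | (intro hh; nlinarith)

lemma eps_exists (d : ℕ) (r' : Fin d → ℝ) (h1 : ∀ i, r' i ≠ 0) (P : Polynomial ℝ)
    (hPne : ∀ k ≤ d, P.coeff k ≠ 0) :
    ∃ ε : ℝ, 0 < ε ∧ (∀ i : Fin d, ε < |r' i|) ∧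
      (∀ k ≤ d, ε * |P.coeff (k + 1)| < |P.coeff k|) := by
  set g : ℕ → ℝ := fun k => |P.coeff k| / (|P.coeff (k + 1)| + 1) with hg
  have hgpos : ∀ k ≤ d, 0 < g k := by
    intro k hk
    exact div_pos (abs_pos.2 (hPne k hk)) (by positivity)
  set ε1 : ℝ := (Finset.range (d + 1)).inf' (Finset.nonempty_range_iff.mpr (Nat.succ_ne_zero d)) g with hε1
  have hε1pos : 0 < ε1 := by
    rw [hε1, Finset.lt_inf'_iff]
    intro k hk
    exact hgpos k (Nat.lt_succ_iff.mp (Finset.mem_range.mp hk))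
  have hε1le : ∀ k ≤ d, ε1 ≤ g k := fun k hk =>
    Finset.inf'_le g (Finset.mem_range.2 (by omega))
  set F : Finset ℝ := insert 1 (Finset.image (fun i => |r' i|) Finset.univ) with hF
  set ε2 : ℝ := F.min' (Finset.insert_nonempty _ _) with hε2
  have hε2pos : 0 < ε2 := by
    rw [hε2, Finset.lt_min'_iff]
    intro x hx
    rw [hF, Finset.mem_insert] at hx
    rcases hx with rfl | hx
    · norm_num
    · obtain ⟨i, _, rfl⟩ := Finset.mem_image.mp hx
      exact abs_pos.2 (h1 i)
  have hε2le : ∀ i : Fin d, ε2 ≤ |r' i| := fun i =>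
    Finset.min'_le _ _ (Finset.mem_insert_of_mem (Finset.mem_image_of_mem _ (Finset.mem_univ i)))
  refine ⟨min ε1 ε2 / 2, by positivity, ?_, ?_⟩
  · intro i
    calc min ε1 ε2 / 2 < min ε1 ε2 := by
          have := lt_min hε1pos hε2pos; linarith
      _ ≤ ε2 := min_le_right _ _
      _ ≤ |r' i| := hε2le i
  · intro k hk
    have h1' : min ε1 ε2 / 2 ≤ g k := by
      have := min_le_left ε1 ε2
      have := hε1le k hk
      have := lt_min hε1pos hε2pos
      linarith
    calc min ε1 ε2 / 2 * |P.coeff (k + 1)|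
        < min ε1 ε2 / 2 * (|P.coeff (k + 1)| + 1) := by
          have := lt_min hε1pos hε2pos
          have hpos : 0 < min ε1 ε2 / 2 := by linarith
          nlinarith
      _ ≤ g k * (|P.coeff (k + 1)| + 1) := by
          have : (0:ℝ) < |P.coeff (k + 1)| + 1 := by positivity
          nlinarith
      _ = |P.coeff k| := by rw [hg]; field_simp

lemma aux (d : ℕ) (σ : ℕ → Bool) (hlead : σ d = true) :
    ∃ r : Fin d → ℝ,
      (∀ i, r i ≠ 0) ∧
      (∀ i j : Fin d, i < j → |r j| < |r i|) ∧
      (∀ i : Fin d, (0 < r i ↔ σ (d - i.val) ≠ σ (d - i.val - 1))) ∧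
      (∀ j ≤ d,
        (∏ i : Fin d, (X - C (r i))).coeff j ≠ 0 ∧
        (0 < (∏ i : Fin d, (X - C (r i))).coeff j ↔ σ j = true)) := by
  induction d generalizing σ with
  | zero =>
    refine ⟨Fin.elim0, fun i => i.elim0, fun i => i.elim0, fun i => i.elim0, ?_⟩
    intro j hj
    interval_cases j
    simp [hlead]
  | succ d ih =>
    obtain ⟨r', h1, h2, h3, h6⟩ := ih (fun j => σ (j + 1)) hlead
    set P : Polynomial ℝ := ∏ i : Fin d, (X - C (r' i)) with hP
    have hPne : ∀ k ≤ d, P.coeff k ≠ 0 := fun k hk => (h6 k hk).1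
    obtain ⟨ε, hεpos, hεlt, hεg⟩ := eps_exists d r' h1 P hPne
    set s : ℝ := if σ 1 = σ 0 then -ε else ε with hs
    have hsne : s ≠ 0 := by rcases eq_or_ne (σ 1) (σ 0) with h | h <;> simp [hs, h] <;> linarith
    have habs : |s| = ε := by
      rcases eq_or_ne (σ 1) (σ 0) with h | h <;> simp [hs, h, abs_of_pos hεpos]
    have hspos : 0 < s ↔ σ 1 ≠ σ 0 := by
      rcases eq_or_ne (σ 1) (σ 0) with h | h <;> simp [hs, h] <;> linarith
    have hprod : (∏ i : Fin (d + 1), (X - C ((Fin.snoc r' s : Fin (d+1) → ℝ) i))) = P * (X - C s) := by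
      rw [Fin.prod_univ_castSucc]
      simp [hP]
    have hcoeff0 : (P * (X - C s)).coeff 0 = P.coeff 0 * (-s) := by
      rw [Polynomial.mul_coeff_zero]
      simp
    have hcoeffS : ∀ k, (P * (X - C s)).coeff (k + 1) = P.coeff k - s * P.coeff (k + 1) := by
      intro k
      rw [mul_sub, Polynomial.coeff_sub, Polynomial.coeff_mul_X, Polynomial.coeff_mul_C]
      ring
    refine ⟨Fin.snoc r' s, ?_, ?_, ?_, ?_⟩
    · intro i
      rcases Fin.eq_castSucc_or_eq_last i with ⟨i', rfl⟩ | rfl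
      · simpa using h1 i'
      · simpa using hsne
    · intro i j hij
      rcases Fin.eq_castSucc_or_eq_last j with ⟨j', rfl⟩ | rfl
      · rcases Fin.eq_castSucc_or_eq_last i with ⟨i', rfl⟩ | rfl
        · simpa using h2 i' j' (by exact_mod_cast hij)
        · exact absurd hij (Fin.castSucc_lt_last j').asymm
      · rcases Fin.eq_castSucc_or_eq_last i with ⟨i', rfl⟩ | rfl
        · simpa [habs] using hεlt i'
        · exact absurd hij (lt_irrefl _)
    · intro i
      rcases Fin.eq_castSucc_or_eq_last i with ⟨i', rfl⟩ | rfl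
      · have hi := i'.2
        have e2 : d + 1 - (i' : ℕ) - 1 = (d - (i' : ℕ) - 1) + 1 := by omega
        have e1 : d + 1 - (i' : ℕ) = (d - (i' : ℕ)) + 1 := by omega
        simp only [Fin.snoc_castSucc, Fin.coe_castSucc]
        rw [e2, e1]
        exact h3 i'
      · simp only [Fin.snoc_last, Fin.val_last]
        have e1 : d + 1 - d = 1 := by omega
        rw [e1]
        simpa using hspos
    · intro j hj
      rw [hprod]
      rcases Nat.eq_zero_or_pos j with rfl | hjpos
      · rw [hcoeff0]
        obtain ⟨ha0, ha0s⟩ := h6 0 (Nat.zero_le d)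
        simp only [Nat.zero_add] at ha0s
        rcases hb1 : σ 1 <;> rcases hb0 : σ 0
        · have hsv : s = -ε := by rw [hs]; simp [hb1, hb0]
          have ha : P.coeff 0 < 0 := by
            rcases ha0.lt_or_gt with h | h
            · exact h
            · rw [ha0s.mp h] at hb1; exact absurd hb1 (by simp)
          have hlt : P.coeff 0 * -s < 0 := by rw [hsv]; nlinarith
          exact ⟨ne_of_lt hlt, by simp [hb0]; nlinarith [hlt]⟩
        · have hsv : s = ε := by rw [hs]; simp [hb1, hb0]
          have ha : P.coeff 0 < 0 := by
            rcases ha0.lt_or_gt with h | h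
            · exact h
            · rw [ha0s.mp h] at hb1; exact absurd hb1 (by simp)
          have hlt : 0 < P.coeff 0 * -s := by rw [hsv]; nlinarith
          exact ⟨ne_of_gt hlt, by simp [hb0]; nlinarith [hlt]⟩
        · have hsv : s = ε := by rw [hs]; simp [hb1, hb0]
          have ha : 0 < P.coeff 0 := ha0s.mpr hb1
          have hlt : P.coeff 0 * -s < 0 := by rw [hsv]; nlinarith
          exact ⟨ne_of_lt hlt, by simp [hb0]; nlinarith [hlt]⟩
        · have hsv : s = -ε := by rw [hs]; simp [hb1, hb0]
          have ha : 0 < P.coeff 0 := ha0s.mpr hb1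
          have hlt : 0 < P.coeff 0 * -s := by rw [hsv]; nlinarith
          exact ⟨ne_of_gt hlt, by simp [hb0]; nlinarith [hlt]⟩
      · obtain ⟨k, rfl⟩ := Nat.exists_eq_succ_of_ne_zero (Nat.pos_iff_ne_zero.mp hjpos)
        rw [hcoeffS k]
        have hk : k ≤ d := by omega
        obtain ⟨ha, has⟩ := h6 k hk
        have hbound : |s * P.coeff (k + 1)| < |P.coeff k| := by
          rw [abs_mul, habs]
          exact hεg k hk
        obtain ⟨hiff, hne⟩ := sign_pert hbound
        exact ⟨hne, by rw [hiff]; exact has⟩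

lemma card_reflect (d : ℕ) (f : ℕ → Prop) [DecidablePred f] :
    (Finset.univ.filter (fun i : Fin d => f (d - 1 - i.val))).card
      = ((Finset.range d).filter f).card := by
  apply Finset.card_bij (fun i _ => d - 1 - i.val)
  · intro i hi
    simp only [mem_filter, mem_range, mem_univ, true_and] at hi ⊢
    have := i.2
    exact ⟨by omega, hi⟩
  · intro i _ j _ h
    have := i.2; have := j.2
    exact Fin.ext (by omega)
  · intro j hj
    simp only [mem_filter, mem_range, mem_univ, true_and] at hj
    refine ⟨⟨d - 1 - j, by omega⟩, by simpa [show d - 1 - (d - 1 - j) = j by omega] using hj.2, by simp; omega⟩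

end Stmt14Aux

/-- Every sign pattern `σ` of length `d + 1` beginning with `+` (here
`σ j` is the sign, `true` = `+`, of the coefficient of `x^j`), with `c` sign changes
and `p` sign preservations, is realizable by a monic degree-`d` hyperbolic polynomial
`∏ (X - r i)` with `c` distinct positive roots, `p` distinct negative roots, all `d`
root moduli pairwise distinct, and the canonical order: listing the roots by strictly
decreasing modulus, the `i`-th root is positive iff the `i`-th step of the sign
pattern (read left to right, i.e. from the coefficient of `x^d` down) is a sign
change. -/
theorem stmt14 (d c p : ℕ) (hd : 1 ≤ d) (σ : ℕ → Bool) (hlead : σ d = true)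
    (hc : c = ((Finset.range d).filter (fun i => σ (i + 1) ≠ σ i)).card)
    (hp : p = ((Finset.range d).filter (fun i => σ (i + 1) = σ i)).card) :
    ∃ r : Fin d → ℝ,
      (∀ i, r i ≠ 0) ∧
      (∀ i j : Fin d, i < j → |r j| < |r i|) ∧
      (∀ i : Fin d, (0 < r i ↔ σ (d - i.val) ≠ σ (d - i.val - 1))) ∧
      (Finset.univ.filter (fun i : Fin d => 0 < r i)).card = c ∧
      (Finset.univ.filter (fun i : Fin d => r i < 0)).card = p ∧
      (∀ j ≤ d,
        (∏ i : Fin d, (X - C (r i))).coeff j ≠ 0 ∧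
        (0 < (∏ i : Fin d, (X - C (r i))).coeff j ↔ σ j = true)) := by
  obtain ⟨r, h1, h2, h3, h6⟩ := aux d σ hlead
  refine ⟨r, h1, h2, h3, ?_, ?_, h6⟩
  · rw [hc, ← card_reflect d (fun j => σ (j + 1) ≠ σ j)]
    congr 1
    apply Finset.filter_congr
    intro i _
    have hi := i.2
    have e1 : d - 1 - i.val + 1 = d - i.val := by omega
    have e2 : d - 1 - i.val = d - i.val - 1 := by omega
    rw [h3 i]
    rw [e1, e2]
  · rw [hp, ← card_reflect d (fun j => σ (j + 1) = σ j)]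
    congr 1
    apply Finset.filter_congr
    intro i _
    have hi := i.2
    have e1 : d - 1 - i.val + 1 = d - i.val := by omega
    have e2 : d - 1 - i.val = d - i.val - 1 := by omega
    have : r i < 0 ↔ ¬ (0 < r i) := by
      constructor
      · intro h; linarith
      · intro h; rcases (h1 i).lt_or_gt with h' | h'
        · exact h'
        · exact absurd h' h
    rw [this, h3 i, e1, e2]
    simp
end

section
/- There exists no degree 5 monic hyperbolic polynomial x^5 + a_4 x^4 + a_3 x^3 + a_2 x^2 + a_1 x + a_0 with two positive roots β < α and three negative roots of moduli γ_1 < γ_2 < γ_3 satisfying 0 < β < γ_1 < γ_2 < γ_3 < α, and with a_4 > 0, a_3 = 0, a_2 < 0, a_1 < 0, a_0 > 0. -/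
/-!
Write `e₁ = γ₁ + γ₂ + γ₃` and `e₂ = γ₁γ₂ + γ₁γ₃ + γ₂γ₃`. Then `a₄ = e₁ - α - β` and
`a₃ = e₂ - (α + β) e₁ + αβ`, so `a₃ = 0` says `β (α - e₁) = α e₁ - e₂`. The right-hand side is
positive because every `γⱼ` lies in `(0, α)`, while `a₄ > 0` makes `α - e₁ < -β < 0`; this
contradicts `β > 0`.
-/

open Polynomial

section Coefficients

variable (α β γ₁ γ₂ γ₃ : ℝ)

theorem coeff_four_quintic :
    ((X - C α) * (X - C β) * (X + C γ₁) * (X + C γ₂) * (X + C γ₃) : ℝ[X]).coeff 4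
      = γ₁ + γ₂ + γ₃ - α - β := by
  simp only [mul_add, mul_sub, coeff_add, coeff_sub, coeff_mul_X, coeff_mul_C, coeff_X, coeff_C]
  norm_num
  ring

theorem coeff_three_quintic :
    ((X - C α) * (X - C β) * (X + C γ₁) * (X + C γ₂) * (X + C γ₃) : ℝ[X]).coeff 3
      = γ₁ * γ₂ + γ₁ * γ₃ + γ₂ * γ₃ - (α + β) * (γ₁ + γ₂ + γ₃) + α * β := by
  simp only [mul_add, mul_sub, coeff_add, coeff_sub, coeff_mul_X, coeff_mul_C, coeff_X, coeff_C]
  norm_num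
  ring

end Coefficients

theorem pairwise_products_lt_mul_sum {α γ₁ γ₂ γ₃ : ℝ} (h₁ : 0 < γ₁) (h₂ : 0 < γ₂) (h₃ : 0 < γ₃)
    (h₁α : γ₁ < α) (h₂α : γ₂ < α) (h₃α : γ₃ < α) :
    γ₁ * γ₂ + γ₁ * γ₃ + γ₂ * γ₃ < α * (γ₁ + γ₂ + γ₃) := by
  have : γ₁ * γ₂ < α * γ₁ := by nlinarith
  have : γ₁ * γ₃ < α * γ₃ := by nlinarith
  have : γ₂ * γ₃ < α * γ₂ := by nlinarith
  linarith

theorem lt_of_sub_mul_add_mul_eq_zero {α β e₁ e₂ : ℝ} (hβ : 0 < β) (he : e₂ < α * e₁)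
    (h₃ : e₂ - (α + β) * e₁ + α * β = 0) : e₁ < α := by
  have h : 0 < β * (α - e₁) := by linarith
  exact sub_pos.mp (pos_of_mul_pos_right h hβ.le)

/-- There is no degree-5 monic hyperbolic polynomial
`x^5 + a₄x⁴ + a₃x³ + a₂x² + a₁x + a₀` with positive roots `β < α` and negative roots
of moduli `γ₁ < γ₂ < γ₃` satisfying `0 < β < γ₁ < γ₂ < γ₃ < α` and with `a₄ > 0`,
`a₃ = 0`, `a₂ < 0`, `a₁ < 0`, `a₀ > 0`. -/
theorem stmt15 :
    ¬ ∃ α β γ₁ γ₂ γ₃ : ℝ,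
      0 < β ∧ β < γ₁ ∧ γ₁ < γ₂ ∧ γ₂ < γ₃ ∧ γ₃ < α ∧
      (0 < ((X - C α) * (X - C β) * (X + C γ₁) * (X + C γ₂) * (X + C γ₃) :
        Polynomial ℝ).coeff 4) ∧
      (((X - C α) * (X - C β) * (X + C γ₁) * (X + C γ₂) * (X + C γ₃) :
        Polynomial ℝ).coeff 3 = 0) ∧
      (((X - C α) * (X - C β) * (X + C γ₁) * (X + C γ₂) * (X + C γ₃) :
        Polynomial ℝ).coeff 2 < 0) ∧
      (((X - C α) * (X - C β) * (X + C γ₁) * (X + C γ₂) * (X + C γ₃) :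
        Polynomial ℝ).coeff 1 < 0) ∧
      (0 < ((X - C α) * (X - C β) * (X + C γ₁) * (X + C γ₂) * (X + C γ₃) :
        Polynomial ℝ).coeff 0) := by
  rintro ⟨α, β, γ₁, γ₂, γ₃, hβ, hβ₁, h₁₂, h₂₃, h₃α, h₄, h₃, -, -, -⟩
  rw [coeff_four_quintic] at h₄
  rw [coeff_three_quintic] at h₃
  have h₁ : 0 < γ₁ := hβ.trans hβ₁
  have h₂ : 0 < γ₂ := h₁.trans h₁₂
  have he : γ₁ * γ₂ + γ₁ * γ₃ + γ₂ * γ₃ < α * (γ₁ + γ₂ + γ₃) :=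
    pairwise_products_lt_mul_sum h₁ h₂ (h₂.trans h₂₃) (h₁₂.trans (h₂₃.trans h₃α))
      (h₂₃.trans h₃α) h₃α
  linarith [lt_of_sub_mul_add_mul_eq_zero hβ he h₃]
end

section
/- There exists no monic degree 5 hyperbolic polynomial with coefficient signs (+,+,+,−,−,+) (sign pattern Σ_{3,2,1}) whose root moduli satisfy β < γ_1 < γ_2 < γ_3 < α, where β < α are the moduli of the two positive roots and γ_1 < γ_2 < γ_3 are the moduli of the three negative roots. -/
/-!
The coefficient of `X^3` is the second elementary symmetric function of the roots
`α, β, -γ₁, -γ₂, -γ₃`, namely `αβ - (α + β)(γ₁ + γ₂ + γ₃) + (γ₁γ₂ + γ₁γ₃ + γ₂γ₃)`.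
Since `β < γ₁`, the factor `β - (γ₁ + γ₂ + γ₃)` multiplying `α` is negative, so lowering `α`
to `γ₃` raises the coefficient; what remains is `γ₁γ₂ - γ₃² - β(γ₁ + γ₂) < 0`. Hence the
coefficient of `X^3` cannot be positive.
-/

open Polynomial

lemma coeff_three_quintic_s17 (a b g₁ g₂ g₃ : ℝ) :
    ((X - C a) * (X - C b) * (X + C g₁) * (X + C g₂) * (X + C g₃) : ℝ[X]).coeff 3
      = a * b - (a + b) * (g₁ + g₂ + g₃) + (g₁ * g₂ + g₁ * g₃ + g₂ * g₃) := by
  have expand : ((X - C a) * (X - C b) * (X + C g₁) * (X + C g₂) * (X + C g₃) : ℝ[X])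
      = X ^ 5 + C (g₁ + g₂ + g₃ - a - b) * X ^ 4
        + C (a * b - (a + b) * (g₁ + g₂ + g₃) + (g₁ * g₂ + g₁ * g₃ + g₂ * g₃)) * X ^ 3
        + C (a * b * (g₁ + g₂ + g₃) - (a + b) * (g₁ * g₂ + g₁ * g₃ + g₂ * g₃) + g₁ * g₂ * g₃)
          * X ^ 2
        + C (a * b * (g₁ * g₂ + g₁ * g₃ + g₂ * g₃) - (a + b) * (g₁ * g₂ * g₃)) * X
        + C (a * b * g₁ * g₂ * g₃) := by
    simp only [C_add, C_sub, C_mul]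
    ring
  rw [expand]
  simp only [coeff_add, coeff_C_mul, coeff_X_pow, coeff_C, coeff_X]
  norm_num

lemma second_symm_neg_of_moduli_lt {a b g₁ g₂ g₃ : ℝ} (hb : 0 < b) (h₁ : b < g₁)
    (h₂ : g₁ < g₂) (h₃ : g₂ < g₃) (ha : g₃ < a) :
    a * b - (a + b) * (g₁ + g₂ + g₃) + (g₁ * g₂ + g₁ * g₃ + g₂ * g₃) < 0 := by
  have hneg : b - (g₁ + g₂ + g₃) < 0 := by linarith
  calc a * b - (a + b) * (g₁ + g₂ + g₃) + (g₁ * g₂ + g₁ * g₃ + g₂ * g₃)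
      = a * (b - (g₁ + g₂ + g₃)) - b * (g₁ + g₂ + g₃) + (g₁ * g₂ + g₁ * g₃ + g₂ * g₃) := by
        ring
    _ < g₃ * (b - (g₁ + g₂ + g₃)) - b * (g₁ + g₂ + g₃) + (g₁ * g₂ + g₁ * g₃ + g₂ * g₃) := by
        gcongr ?_ - _ + _
        exact mul_lt_mul_of_neg_right ha hneg
    _ = g₁ * g₂ - g₃ * g₃ - b * (g₁ + g₂) := by ring
    _ < 0 := by
        have hsq : g₁ * g₂ < g₃ * g₃ := mul_lt_mul'' (by linarith) h₃ (by linarith) (by linarith)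
        have hpos : 0 < b * (g₁ + g₂) := mul_pos hb (by linarith)
        linarith

/-- There is no monic degree-5 hyperbolic polynomial with coefficient
signs `+,+,+,-,-,+` (sign pattern `Σ_{3,2,1}`) whose root moduli satisfy
`β < γ₁ < γ₂ < γ₃ < α`, where `β < α` are the moduli of the two positive roots and
`γ₁ < γ₂ < γ₃` the moduli of the three negative roots. -/
theorem stmt17 :
    ¬ ∃ α β γ₁ γ₂ γ₃ : ℝ,
      0 < β ∧ β < γ₁ ∧ γ₁ < γ₂ ∧ γ₂ < γ₃ ∧ γ₃ < α ∧
      (0 < ((X - C α) * (X - C β) * (X + C γ₁) * (X + C γ₂) * (X + C γ₃) :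
        Polynomial ℝ).coeff 4) ∧
      (0 < ((X - C α) * (X - C β) * (X + C γ₁) * (X + C γ₂) * (X + C γ₃) :
        Polynomial ℝ).coeff 3) ∧
      (((X - C α) * (X - C β) * (X + C γ₁) * (X + C γ₂) * (X + C γ₃) :
        Polynomial ℝ).coeff 2 < 0) ∧
      (((X - C α) * (X - C β) * (X + C γ₁) * (X + C γ₂) * (X + C γ₃) :
        Polynomial ℝ).coeff 1 < 0) ∧
      (0 < ((X - C α) * (X - C β) * (X + C γ₁) * (X + C γ₂) * (X + C γ₃) :
        Polynomial ℝ).coeff 0) := by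
  rintro ⟨α, β, γ₁, γ₂, γ₃, hβ, h₁, h₂, h₃, hα, -, hcoeff₃, -, -, -⟩
  rw [coeff_three_quintic_s17] at hcoeff₃
  exact (second_symm_neg_of_moduli_lt hβ h₁ h₂ h₃ hα).not_gt hcoeff₃
end

section
/- Let P be a monic hyperbolic polynomial of degree d realizing the sign pattern Σ_{m,n,1} (m pluses, n minuses, one final plus, m+n = d) with m ≤ n, whose smaller positive-root modulus β is strictly less than the smallest negative-root modulus γ_1. Then the number of negative-root moduli γ_j that are ≥ α (the larger positive-root modulus) is at most 2m−1; equivalently, if m < n−1 then γ_{d−2m−1} < α. -/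
open Polynomial


lemma esymm_zero' (s : Multiset ℝ) : s.esymm 0 = 1 := by
  simp [Multiset.esymm, Multiset.powersetCard_zero_left]

lemma esymm_cons (a : ℝ) (s : Multiset ℝ) (k : ℕ) :
    (a ::ₘ s).esymm (k+1) = s.esymm (k+1) + a * s.esymm k := by
  rw [Multiset.esymm, Multiset.powersetCard_cons, Multiset.map_add, Multiset.sum_add,
    Multiset.map_map]
  congr 1
  rw [Multiset.esymm, ← Multiset.sum_map_mul_left]
  congr 1
  exact Multiset.map_congr rfl fun x _ => by simp [Multiset.prod_cons]

lemma esymm_nonneg {s : Multiset ℝ} (h : ∀ x ∈ s, 0 ≤ x) (k : ℕ) : 0 ≤ s.esymm k := by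
  refine Multiset.sum_nonneg fun x hx => ?_
  obtain ⟨t, ht, rfl⟩ := Multiset.mem_map.mp hx
  exact Multiset.prod_nonneg fun y hy => h y (Multiset.mem_of_le (Multiset.mem_powersetCard.mp ht).1 hy)

lemma esymm_one' (s : Multiset ℝ) : s.esymm 1 = s.sum := by
  rw [Multiset.esymm, Multiset.powersetCard_one, Multiset.map_map]
  simp

lemma lemA1 (ρ : ℝ) (hρ : 0 ≤ ρ) (S : Multiset ℝ) (hS : ∀ x ∈ S, ρ ≤ x) :
    ∀ m : ℕ, 1 ≤ m →
      ρ * ((Multiset.card S : ℝ) - m + 1) * S.esymm (m-1) ≤ (m : ℝ) * S.esymm m := by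
  induction S using Multiset.induction with
  | empty =>
    intro m hm
    have h0 : (Multiset.esymm 0 m : ℝ) = 0 := by
      rcases m with _|m
      · omega
      · simp [Multiset.esymm, Multiset.powersetCard_zero_right]
    rcases m with _|_|m
    · omega
    · simp [h0, esymm_zero']
    · have h1 : (Multiset.esymm (0:Multiset ℝ) (m+1)) = 0 := by
        simp [Multiset.esymm, Multiset.powersetCard_zero_right]
      simp only [Nat.add_sub_cancel] at *
      rw [h0, h1]
      simp
  | cons g T IH =>
    intro m hm
    have hgρ : ρ ≤ g := hS g (Multiset.mem_cons_self g T)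
    have hT : ∀ x ∈ T, ρ ≤ x := fun x hx => hS x (Multiset.mem_cons_of_mem hx)
    have hTnn : ∀ x ∈ T, (0:ℝ) ≤ x := fun x hx => le_trans hρ (hT x hx)
    have hg0 : 0 ≤ g := le_trans hρ hgρ
    have cardc : (Multiset.card (g ::ₘ T) : ℝ) = (Multiset.card T : ℝ) + 1 := by
      simp
    rcases m with _|_|m
    · omega
    · -- m = 1
      norm_num
      simp only [esymm_zero', esymm_one', Multiset.sum_cons, one_mul, cardc]
      have hsum : ρ * (Multiset.card T : ℝ) ≤ T.sum := by
        have := Multiset.card_nsmul_le_sum hT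
        rw [nsmul_eq_mul] at this
        linarith [this]
      ring_nf
      nlinarith [hsum]
    · -- m = k + 2
      set k := m + 2 with hk
      have hk1 : (1:ℕ) ≤ k := by omega
      have IH1 := IH hT k (by omega)
      have IH2 := IH hT (k-1) (by omega)
      have e1 : (g ::ₘ T).esymm k = T.esymm k + g * T.esymm (k-1) := by
        have := esymm_cons g T (k-1)
        simpa [hk] using esymm_cons g T (m+1)
      have e2 : (g ::ₘ T).esymm (k-1) = T.esymm (k-1) + g * T.esymm (k-2) := by
        simpa [hk] using esymm_cons g T m
      have hkk : (k:ℝ) ≥ 2 := by exact_mod_cast by omega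
      have hnn1 : 0 ≤ T.esymm (k-1) := esymm_nonneg hTnn _
      have hnn2 : 0 ≤ T.esymm (k-2) := esymm_nonneg hTnn _
      have hc2 : ((k-1 : ℕ):ℝ) = (k:ℝ) - 1 := by
        have : (1:ℕ) ≤ k := hk1
        push_cast [this]
        ring
      have hsub : (k-1-1 : ℕ) = k - 2 := by omega
      rw [hsub, hc2] at IH2
      rw [e1, e2, cardc]
      set N := (Multiset.card T : ℝ)
      -- goal: ρ * (N + 1 - k + 1) * (e_{k-1}(T) + g e_{k-2}(T)) ≤ k (e_k(T) + g e_{k-1}(T))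
      -- IH1: ρ * (N - k + 1) * e_{k-1}(T) ≤ k * e_k(T)
      -- IH2: ρ * (N - (k-1) + 1) * e_{k-2}(T) ≤ (k-1) * e_{k-1}(T)
      nlinarith [IH1, IH2, mul_le_mul_of_nonneg_left IH2 hg0, mul_nonneg (sub_nonneg.mpr hgρ) hnn1]

lemma lemA (ρ : ℝ) (hρ : 0 < ρ) (m : ℕ) (hm : 1 ≤ m) (B : Multiset ℝ)
    (hB : ∀ x ∈ B, ρ ≤ x) (hcard : 2*m ≤ Multiset.card B + 1) :
    ∀ C : Multiset ℝ, (∀ x ∈ C, 0 ≤ x) →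
      ∀ j, 1 ≤ j → j ≤ m → ρ * (B+C).esymm (j-1) ≤ (B+C).esymm j := by
  intro C
  induction C using Multiset.induction with
  | empty =>
    intro _ j hj1 hjm
    rw [add_zero]
    have h1 := lemA1 ρ hρ.le B hB j hj1
    have hBnn : ∀ x ∈ B, (0:ℝ) ≤ x := fun x hx => le_trans hρ.le (hB x hx)
    have hnn : 0 ≤ B.esymm (j-1) := esymm_nonneg hBnn _
    have hcj : (j:ℝ) ≤ (Multiset.card B : ℝ) - j + 1 := by
      have : 2*j ≤ Multiset.card B + 1 := by omega
      have := (Nat.cast_le (α := ℝ)).mpr this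
      push_cast at this ⊢
      linarith
    have h2 : ρ * (j:ℝ) * B.esymm (j-1) ≤ ρ * ((Multiset.card B : ℝ) - j + 1) * B.esymm (j-1) := by
      apply mul_le_mul_of_nonneg_right _ hnn
      exact mul_le_mul_of_nonneg_left hcj hρ.le
    have hj0 : (0:ℝ) < j := by exact_mod_cast hj1
    nlinarith [h1, h2]
  | cons s C IH =>
    intro hC j hj1 hjm
    have hs : 0 ≤ s := hC s (Multiset.mem_cons_self s C)
    have hC' : ∀ x ∈ C, (0:ℝ) ≤ x := fun x hx => hC x (Multiset.mem_cons_of_mem hx)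
    have hrw : B + (s ::ₘ C) = s ::ₘ (B + C) := by
      rw [Multiset.add_cons]
    rw [hrw]
    rcases j with _|_|j'
    · omega
    · -- j = 1
      have IH1 := IH hC' 1 le_rfl (by omega)
      have IH1' : ρ * (B + C).esymm 0 ≤ (B + C).esymm 1 := IH1
      show ρ * (s ::ₘ (B + C)).esymm 0 ≤ (s ::ₘ (B + C)).esymm 1
      rw [esymm_zero', esymm_one', Multiset.sum_cons] at *
      linarith
    · have IH1 := IH hC' (j'+2) (by omega) hjm
      have IH2 := IH hC' (j'+1) (by omega) (by omega)
      have e1 : (s ::ₘ (B+C)).esymm (j'+2) = (B+C).esymm (j'+2) + s * (B+C).esymm (j'+1) :=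
        esymm_cons _ _ _
      have e2 : (s ::ₘ (B+C)).esymm (j'+2-1) = (B+C).esymm (j'+1) + s * (B+C).esymm (j') := by
        simpa using esymm_cons s (B+C) j'
      have IH1' : ρ * (B + C).esymm (j'+1) ≤ (B + C).esymm (j'+2) := IH1
      have IH2' : ρ * (B + C).esymm j' ≤ (B + C).esymm (j'+1) := IH2
      rw [e1, e2]
      nlinarith [IH1', mul_le_mul_of_nonneg_left IH2' hs]

lemma sum_count_le (F : Finset ℝ) (M : Multiset ℝ) : ∑ x ∈ F, M.count x ≤ Multiset.card M := by
  have h1 : ∑ x ∈ F, M.count x = ∑ x ∈ F ∩ M.toFinset, M.count x := by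
    refine (Finset.sum_subset Finset.inter_subset_left fun x hx hx2 => ?_).symm
    have : x ∉ M.toFinset := fun hm => hx2 (Finset.mem_inter.mpr ⟨hx, hm⟩)
    simpa [Multiset.count_eq_zero] using fun hm => this (Multiset.mem_toFinset.mpr hm)
  rw [h1]
  calc ∑ x ∈ F ∩ M.toFinset, M.count x ≤ ∑ x ∈ M.toFinset, M.count x :=
        Finset.sum_le_sum_of_subset Finset.inter_subset_right
    _ = Multiset.card M := M.toFinset_sum_count_eq

lemma card_filter_roots_le_derivative (p : ℝ[X]) (c : ℝ) :
    Multiset.card (p.roots.filter (· ≤ c)) ≤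
      Multiset.card ((derivative p).roots.filter (· ≤ c)) + 1 := by
  rcases eq_or_ne (derivative p) 0 with hp' | hp'
  · rw [eq_C_of_derivative_eq_zero hp']
    simp [roots_C]
  have hp : p ≠ 0 := ne_of_apply_ne derivative (by rwa [derivative_zero])
  set Mp := p.roots.filter (· ≤ c) with hMp
  set Mq := (derivative p).roots.filter (· ≤ c) with hMq
  -- interleaving of distinct roots
  have hint : Mp.toFinset.card ≤ (Mq.toFinset \ Mp.toFinset).card + 1 := by
    refine Finset.card_le_diff_of_interleaved fun x hx y hy hxy _ => ?_
    rw [Multiset.mem_toFinset, hMp, Multiset.mem_filter, mem_roots hp] at hx hy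
    obtain ⟨z, hz1, hz2⟩ := exists_deriv_eq_zero hxy p.continuousOn (hx.1.trans hy.1.symm)
    refine ⟨z, ?_, hz1.1, hz1.2⟩
    rw [Multiset.mem_toFinset, hMq, Multiset.mem_filter, mem_roots hp']
    exact ⟨by rwa [IsRoot, ← p.deriv], le_trans hz1.2.le hy.2⟩
  have hcount : ∀ x ∈ Mp.toFinset, Mp.count x = p.rootMultiplicity x := by
    intro x hx
    have hxc : x ≤ c := (Multiset.mem_filter.mp (Multiset.mem_toFinset.mp hx)).2
    rw [hMp, Multiset.count_filter, if_pos hxc, count_roots]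
  have hcountq : ∀ x : ℝ, x ≤ c → Mq.count x = (derivative p).rootMultiplicity x := by
    intro x hxc
    rw [hMq, Multiset.count_filter, if_pos hxc, count_roots]
  calc Multiset.card Mp = ∑ x ∈ Mp.toFinset, Mp.count x := (Multiset.toFinset_sum_count_eq _).symm
    _ = ∑ x ∈ Mp.toFinset, (Mp.count x - 1 + 1) := by
        refine Finset.sum_congr rfl fun x hx => ?_
        have : 1 ≤ Mp.count x := Multiset.count_pos.mpr (Multiset.mem_toFinset.mp hx)
        omega
    _ = (∑ x ∈ Mp.toFinset, (Mp.count x - 1)) + Mp.toFinset.card := by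
        rw [Finset.sum_add_distrib, Finset.card_eq_sum_ones]
    _ ≤ (∑ x ∈ Mp.toFinset, Mq.count x) + ((Mq.toFinset \ Mp.toFinset).card + 1) := by
        refine add_le_add (Finset.sum_le_sum fun x hx => ?_) hint
        have hxc : x ≤ c := (Multiset.mem_filter.mp (Multiset.mem_toFinset.mp hx)).2
        rw [hcount x hx, hcountq x hxc]
        exact p.rootMultiplicity_sub_one_le_derivative_rootMultiplicity x
    _ ≤ (∑ x ∈ Mp.toFinset, Mq.count x) + ((∑ x ∈ Mq.toFinset \ Mp.toFinset, Mq.count x) + 1) := by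
        refine add_le_add_right (add_le_add_left ?_ 1) _
        rw [Finset.card_eq_sum_ones]
        refine Finset.sum_le_sum fun x hx => ?_
        have : x ∈ Mq.toFinset := (Finset.mem_sdiff.mp hx).1
        exact Multiset.count_pos.mpr (Multiset.mem_toFinset.mp this)
    _ = (∑ x ∈ Mp.toFinset ∪ (Mq.toFinset \ Mp.toFinset), Mq.count x) + 1 := by
        rw [Finset.sum_union Finset.disjoint_sdiff]
        ring
    _ ≤ Multiset.card Mq + 1 := add_le_add_left (sum_count_le _ _) 1

lemma eval_pos_of_coeffs (R : ℝ[X]) (h0 : 0 < R.coeff 0) (h : ∀ j, 0 ≤ R.coeff j)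
    {x : ℝ} (hx : 0 < x) : 0 < R.eval x := by
  rw [eval_eq_sum_range]
  have hmem : (0:ℕ) ∈ Finset.range (R.natDegree + 1) := by simp
  have hle : R.coeff 0 * x ^ 0 ≤ ∑ i ∈ Finset.range (R.natDegree + 1), R.coeff i * x ^ i :=
    Finset.single_le_sum (fun i _ => mul_nonneg (h i) (pow_nonneg hx.le i)) hmem
  simpa using lt_of_lt_of_le (by simpa using h0) hle

lemma strictmono_div_pow (Q : ℝ[X]) (n : ℕ) (hn : 1 ≤ n)
    (hR : ∀ x : ℝ, 0 < x → 0 < x * (derivative Q).eval x - (n:ℝ) * Q.eval x) :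
    StrictMonoOn (fun x : ℝ => Q.eval x / x ^ n) (Set.Ioi (0:ℝ)) := by
  have hderiv : ∀ x : ℝ, 0 < x → HasDerivAt (fun y : ℝ => Q.eval y / y ^ n)
      (((derivative Q).eval x * x ^ n - Q.eval x * ((n:ℝ) * x ^ (n-1))) / (x ^ n) ^ 2) x := by
    intro x hx
    exact (Q.hasDerivAt x).div (hasDerivAt_pow n x) (pow_ne_zero n hx.ne')
  refine strictMonoOn_of_deriv_pos (convex_Ioi 0) ?_ ?_
  · intro x hx
    exact ((hderiv x hx).continuousAt).continuousWithinAt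
  · intro x hx
    rw [interior_Ioi] at hx
    have hx' : (0:ℝ) < x := hx
    rw [(hderiv x hx').deriv]
    apply div_pos _ (by positivity)
    have hxpow : x ^ n = x * x ^ (n-1) := by
      conv_lhs => rw [show n = 1 + (n-1) by omega]
      rw [pow_add, pow_one]
    have : (derivative Q).eval x * x ^ n - Q.eval x * ((n:ℝ) * x ^ (n-1))
        = x ^ (n-1) * (x * (derivative Q).eval x - (n:ℝ) * Q.eval x) := by
      rw [hxpow]; ring
    rw [this]
    exact mul_pos (by positivity) (hR x hx')


set_option maxHeartbeats 1000000 in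
/-- Let `P` be a monic hyperbolic polynomial of degree `d` realizing the
sign pattern `Σ_{m,n,1}` (`m` pluses, `n` minuses, one final plus, `m + n = d`) with
`m ≤ n`, whose smaller positive-root modulus `β` is strictly less than every
negative-root modulus. Then at most `2m - 1` negative-root moduli are `≥ α`, the
larger positive-root modulus. -/
theorem stmt19 (d m n : ℕ) (P : Polynomial ℝ)
    (hm1 : 1 ≤ m) (hn1 : 1 ≤ n) (hmn : m + n = d) (hmlen : m ≤ n)
    (hmonic : P.Monic) (hdeg : P.natDegree = d)
    (hhyp : Multiset.card P.roots = d)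
    (hsignhi : ∀ j, n + 1 ≤ j → j ≤ d → 0 < P.coeff j)
    (hsignmid : ∀ j, 1 ≤ j → j ≤ n → P.coeff j < 0)
    (hsign0 : 0 < P.coeff 0)
    (α β : ℝ) (hα : α ∈ P.roots) (hβ : β ∈ P.roots)
    (hαpos : 0 < α) (hβpos : 0 < β)
    (hminmax : ∀ c ∈ P.roots, 0 < c → β ≤ c ∧ c ≤ α)
    (hβγ : ∀ x ∈ P.roots, x < 0 → β < |x|) :
    Multiset.card (P.roots.filter (fun x => x < 0 ∧ α ≤ |x|)) ≤ 2 * m - 1 := by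
  classical
  by_contra hcon
  push_neg at hcon
  have hK2m : 2*m ≤ Multiset.card (P.roots.filter (fun x => x < 0 ∧ α ≤ |x|)) := by omega
  have hd2 : 2 ≤ d := by omega
  have hP0 : P ≠ 0 := hmonic.ne_zero
  set Q := derivative P with hQdef
  -- degree and leading coefficient of Q
  have hcoeffd : P.coeff d = 1 := by
    have := hmonic.coeff_natDegree
    rwa [hdeg] at this
  have hQtop : Q.coeff (d-1) = (d:ℝ) := by
    have h1 : d - 1 + 1 = d := by omega
    rw [hQdef, coeff_derivative, h1, hcoeffd, one_mul]
    have h2 : ((d-1 : ℕ):ℝ) = (d:ℝ) - 1 := by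
      have : (1:ℕ) ≤ d := by omega
      push_cast [this]
      ring
    rw [h2]
    ring
  have hQdeg : Q.natDegree = d - 1 := by
    have hle : Q.natDegree ≤ d - 1 := by
      have := natDegree_derivative_le P
      rwa [hdeg] at this
    have hge : d - 1 ≤ Q.natDegree := by
      apply le_natDegree_of_ne_zero
      rw [hQtop]
      positivity
    omega
  have hQ0 : Q ≠ 0 := by
    intro h
    rw [h, coeff_zero] at hQtop
    have : (0:ℝ) < d := by positivity
    rw [← hQtop] at this
    exact lt_irrefl 0 this
  have hQlc : Q.leadingCoeff = (d:ℝ) := by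
    rw [leadingCoeff, hQdeg, hQtop]
  -- number of roots of Q
  have hcardQ : Multiset.card Q.roots = d - 1 := by
    have h1 : Multiset.card Q.roots ≤ d - 1 := by
      have := Q.card_roots'
      rwa [hQdeg] at this
    have h2 := P.card_roots_le_derivative
    rw [hhyp, ← hQdef] at h2
    omega
  -- coefficient signs of Q
  have hQneg : ∀ j, j < n → Q.coeff j < 0 := by
    intro j hj
    rw [hQdef, coeff_derivative]
    have h1 : P.coeff (j+1) < 0 := hsignmid (j+1) (by omega) (by omega)
    have h2 : (0:ℝ) < (j:ℝ) + 1 := by positivity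
    exact mul_neg_of_neg_of_pos h1 h2
  have hQnn : ∀ j, n ≤ j → 0 ≤ Q.coeff j := by
    intro j hj
    rcases le_or_gt j (d-1) with h | h
    · rw [hQdef, coeff_derivative]
      have h1 : 0 < P.coeff (j+1) := hsignhi (j+1) (by omega) (by omega)
      positivity
    · rw [coeff_eq_zero_of_natDegree_lt (by omega : Q.natDegree < j)]
  have hQc0 : Q.coeff 0 < 0 := hQneg 0 (by omega)
  -- Vieta
  have hesymmneg : (-1:ℝ)^m * Q.roots.esymm m < 0 := by
    have hcoeffn1 : Q.coeff (n-1) < 0 := hQneg (n-1) (by omega)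
    have hidx : Q.natDegree - (n-1) = m := by rw [hQdeg]; omega
    have hV := Q.coeff_eq_esymm_roots_of_card (by rw [hcardQ, hQdeg]) 
      (k := n-1) (by rw [hQdeg]; omega)
    rw [hidx, hQlc] at hV
    rw [hV] at hcoeffn1
    have hd0 : (0:ℝ) < d := by positivity
    nlinarith [hcoeffn1]
  set t : Multiset ℝ := Q.roots.map Neg.neg with htdef
  have htm : t.esymm m < 0 := by
    rw [htdef, Multiset.esymm_neg]
    exact hesymmneg
  -- localized Rolle
  have hfiltereq : P.roots.filter (fun x => x < 0 ∧ α ≤ |x|) = P.roots.filter (· ≤ -α) := by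
    apply Multiset.filter_congr
    intro x _
    constructor
    · rintro ⟨hx1, hx2⟩
      rw [abs_of_neg hx1] at hx2
      linarith
    · intro hx
      have hx1 : x < 0 := by linarith
      rw [abs_of_neg hx1]
      exact ⟨hx1, by linarith⟩
  have hKQ : 2*m - 1 ≤ Multiset.card (Q.roots.filter (· ≤ -α)) := by
    have := card_filter_roots_le_derivative P (-α)
    rw [hfiltereq] at hK2m
    rw [← hQdef] at this
    omega
  -- roots of Q are nonzero
  have h0Q : ∀ x ∈ Q.roots, x ≠ 0 := by
    intro x hx hx0
    have hroot := isRoot_of_mem_roots hx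
    rw [hx0] at hroot
    rw [IsRoot, ← coeff_zero_eq_eval_zero] at hroot
    rw [hroot] at hQc0
    exact lt_irrefl 0 hQc0
  set A : Multiset ℝ := Q.roots.filter (· < 0) with hAdef
  set Bp : Multiset ℝ := Q.roots.filter (fun x => ¬ x < 0) with hBpdef
  have hQsplit : A + Bp = Q.roots := Multiset.filter_add_not _ _
  have hBppos : ∀ x ∈ Bp, 0 < x := by
    intro x hx
    rw [hBpdef, Multiset.mem_filter] at hx
    rcases hx with ⟨hx1, hx2⟩
    rcases lt_trichotomy x 0 with h|h|h
    · exact absurd h hx2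
    · exact absurd h (h0Q x hx1)
    · exact h
  -- the auxiliary positivity polynomial R
  set R : ℝ[X] := X * derivative Q - C (n:ℝ) * Q with hRdef
  have hRc0 : 0 < R.coeff 0 := by
    rw [hRdef, coeff_sub, mul_coeff_zero, coeff_X_zero, zero_mul, coeff_C_mul]
    have : (0:ℝ) < n := by positivity
    nlinarith [hQc0]
  have hRcoeffs : ∀ j, 0 ≤ R.coeff j := by
    intro j
    rcases j with _|j
    · exact hRc0.le
    · rw [hRdef, coeff_sub, coeff_X_mul, coeff_C_mul, coeff_derivative]
      rcases lt_or_ge (j+1) n with h | h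
      · have h1 : Q.coeff (j+1) < 0 := hQneg (j+1) h
        have h2 : (j:ℝ) + 1 - n < 0 := by
          have : ((j+1:ℕ):ℝ) < (n:ℕ) := by exact_mod_cast h
          push_cast at this
          linarith
        nlinarith [h1, h2]
      · have h1 : 0 ≤ Q.coeff (j+1) := hQnn (j+1) h
        have h2 : (0:ℝ) ≤ (j:ℝ) + 1 - n := by
          have : ((n:ℕ):ℝ) ≤ ((j+1:ℕ):ℝ) := by exact_mod_cast h
          push_cast at this
          linarith
        nlinarith [h1, h2]
  have hReval : ∀ x : ℝ, 0 < x → 0 < x * (derivative Q).eval x - (n:ℝ) * Q.eval x := by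
    intro x hx
    have := eval_pos_of_coeffs R hRc0 hRcoeffs hx
    rw [hRdef] at this
    simpa [eval_sub, eval_mul, eval_X, eval_C] using this
  have hmono := strictmono_div_pow Q n hn1 hReval
  -- P is positive to the right of α
  have hPevalpos : ∀ x : ℝ, α < x → 0 < P.eval x := by
    intro x hx
    have hprod := prod_multiset_X_sub_C_of_monic_of_roots_card_eq hmonic
      (by rw [hdeg]; exact hhyp)
    rw [← hprod, eval_multiset_prod, Multiset.map_map]
    apply Multiset.prod_pos
    intro y hy
    obtain ⟨r, hr, rfl⟩ := Multiset.mem_map.mp hy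
    simp only [Function.comp_apply, eval_sub, eval_X, eval_C]
    rcases lt_trichotomy r 0 with h|h|h
    · nlinarith [hαpos]
    · subst h
      exfalso
      have hroot := isRoot_of_mem_roots hr
      rw [IsRoot, ← coeff_zero_eq_eval_zero] at hroot
      rw [hroot] at hsign0
      exact lt_irrefl 0 hsign0
    · have := (hminmax r hr h).2
      linarith
  -- Q.eval α is nonnegative
  have hQα : 0 ≤ Q.eval α := by
    have hαroot : P.eval α = 0 := isRoot_of_mem_roots hα
    have h := P.hasDerivAt α
    rw [hasDerivAt_iff_tendsto_slope] at h
    have h' : Filter.Tendsto (slope (fun y => P.eval y) α) (nhdsWithin α (Set.Ioi α))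
        (nhds (Q.eval α)) := by
      apply h.mono_left
      apply nhdsWithin_mono
      intro y hy
      have : α < y := hy
      simp only [Set.mem_compl_iff, Set.mem_singleton_iff]
      exact ne_of_gt this
    refine ge_of_tendsto h' ?_
    filter_upwards [self_mem_nhdsWithin] with x hx
    have hx' : α < x := hx
    have hgoal : 0 ≤ (P.eval x - P.eval α) / (x - α) := by
      rw [hαroot, div_nonneg_iff]
      left
      constructor <;> nlinarith [hPevalpos x hx']
    simpa only [slope_def_field] using hgoal
  -- elements of Bp are at most α
  have hBproot : ∀ x ∈ Bp, Q.eval x = 0 := by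
    intro x hx
    have hxr : x ∈ Q.roots := (Multiset.mem_filter.mp hx).1
    exact (mem_roots hQ0).mp hxr
  have hBple : ∀ x ∈ Bp, x ≤ α := by
    intro x hx
    by_contra hlt
    push_neg at hlt
    have hxpos := hBppos x hx
    have hmem1 : α ∈ Set.Ioi (0:ℝ) := hαpos
    have hmem2 : x ∈ Set.Ioi (0:ℝ) := hxpos
    have h1 := hmono hmem1 hmem2 hlt
    simp only at h1
    rw [hBproot x hx] at h1
    have h2 : 0 ≤ Q.eval α / α ^ n := by
      apply div_nonneg hQα
      positivity
    rw [zero_div] at h1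
    linarith
  -- Bp has at most one element
  have hdouble : ∀ x : ℝ, 0 < x → 2 ≤ Q.roots.count x → False := by
    intro x hxpos hcount
    have hxroot : x ∈ Q.roots := by
      rw [← Multiset.count_pos]
      omega
    have hQx : Q.eval x = 0 := (mem_roots hQ0).mp hxroot
    rw [count_roots] at hcount
    have hdvd : (X - C x)^2 ∣ Q :=
      dvd_trans (pow_dvd_pow _ hcount) (Q.pow_rootMultiplicity_dvd x)
    obtain ⟨W, hW⟩ := hdvd
    have hQ'x : (derivative Q).eval x = 0 := by
      rw [hW]
      simp [derivative_mul, derivative_pow, eval_add, eval_mul, eval_pow, eval_sub, eval_X,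
        eval_C, sub_self]
    have := hReval x hxpos
    rw [hQx, hQ'x] at this
    simp at this
  have hBpcard : Multiset.card Bp ≤ 1 := by
    by_contra hc
    push_neg at hc
    obtain ⟨x, hxBp⟩ := Multiset.card_pos_iff_exists_mem.mp (show 0 < Multiset.card Bp by omega)
    obtain ⟨Bp', hBp'⟩ := Multiset.exists_cons_of_mem hxBp
    have hcB' : 1 ≤ Multiset.card Bp' := by
      have := congrArg Multiset.card hBp'
      simp only [Multiset.card_cons] at this
      omega
    obtain ⟨y, hyBp'⟩ := Multiset.card_pos_iff_exists_mem.mp (show 0 < Multiset.card Bp' by omega)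
    have hyBp : y ∈ Bp := by
      rw [hBp']
      exact Multiset.mem_cons_of_mem hyBp'
    rcases eq_or_ne x y with rfl | hne
    · have hcnt : 2 ≤ Bp.count x := by
        rw [hBp', Multiset.count_cons_self]
        have : 1 ≤ Bp'.count x := Multiset.count_pos.mpr hyBp'
        omega
      have hle : Bp.count x ≤ Q.roots.count x :=
        Multiset.count_le_of_le x (Multiset.filter_le _ _)
      exact hdouble x (hBppos x hxBp) (le_trans hcnt hle)
    · have hfx : Q.eval x / x ^ n = 0 := by rw [hBproot x hxBp, zero_div]
      have hfy : Q.eval y / y ^ n = 0 := by rw [hBproot y hyBp, zero_div]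
      have : x = y := by
        apply hmono.injOn (hBppos x hxBp) (hBppos y hyBp)
        simp only
        rw [hfx, hfy]
      exact hne this
  -- the moduli of negative roots of Q
  set t' : Multiset ℝ := A.map Neg.neg with ht'def
  have ht'pos : ∀ y ∈ t', 0 < y := by
    intro y hy
    obtain ⟨x, hx, rfl⟩ := Multiset.mem_map.mp hy
    have : x < 0 := (Multiset.mem_filter.mp hx).2
    simpa using this
  -- at least 2m-1 elements of t' are ≥ α
  have hbigcard : 2*m - 1 ≤ Multiset.card (t'.filter (fun z => α ≤ z)) := by
    rw [ht'def, Multiset.filter_map]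
    rw [Multiset.card_map]
    have heq : Multiset.filter ((fun z => α ≤ z) ∘ Neg.neg) A
        = Q.roots.filter (· ≤ -α) := by
      rw [hAdef, Multiset.filter_filter]
      apply Multiset.filter_congr
      intro x _
      constructor
      · rintro ⟨h1, _⟩
        simp only [Function.comp_apply] at h1
        linarith
      · intro hx
        constructor
        · simp only [Function.comp_apply]
          linarith
        · linarith
    rw [heq]
    exact hKQ
  -- apply the symmetric function inequality
  obtain ⟨m', rfl⟩ : ∃ m', m = m' + 1 := ⟨m-1, by omega⟩
  have hlem : α * t'.esymm m' ≤ t'.esymm (m'+1) := by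
    have hB : ∀ x ∈ t'.filter (fun z => α ≤ z), α ≤ x := by
      intro x hx
      exact (Multiset.mem_filter.mp hx).2
    have hC : ∀ x ∈ t'.filter (fun z => ¬ α ≤ z), (0:ℝ) ≤ x := by
      intro x hx
      exact (ht'pos x (Multiset.mem_of_mem_filter hx)).le
    have h := lemA α hαpos (m'+1) (by omega) (t'.filter (fun z => α ≤ z)) hB
      (by omega) (t'.filter (fun z => ¬ α ≤ z)) hC (m'+1) (by omega) le_rfl
    rwa [Multiset.filter_add_not] at h
  have ht'nn : 0 ≤ t'.esymm m' :=
    esymm_nonneg (fun x hx => (ht'pos x hx).le) m'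
  -- final contradiction
  rcases Nat.le_one_iff_eq_zero_or_eq_one.mp hBpcard with h | h
  · have hBp0 : Bp = 0 := Multiset.card_eq_zero.mp h
    have htt' : t = t' := by
      rw [htdef, ht'def, ← hQsplit, hBp0, add_zero]
    rw [htt'] at htm
    nlinarith [hlem, mul_nonneg hαpos.le ht'nn]
  · obtain ⟨x₀, hx₀⟩ := Multiset.card_eq_one.mp h
    have hx₀Bp : x₀ ∈ Bp := by rw [hx₀]; exact Multiset.mem_singleton_self x₀
    have hx₀pos := hBppos x₀ hx₀Bp
    have hx₀le := hBple x₀ hx₀Bp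
    have htt' : t = (-x₀) ::ₘ t' := by
      rw [htdef, ht'def, ← hQsplit, hx₀, Multiset.map_add, Multiset.map_singleton,
        add_comm, Multiset.singleton_add]
    rw [htt'] at htm
    rw [esymm_cons] at htm
    nlinarith [hlem, mul_le_mul_of_nonneg_right hx₀le ht'nn]
end
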